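/- Let Δ be a shifting operation on simplicial complexes on the vertex set [n] and Γ a (d−1)-dimensional simplicial complex. Then adeg_i Γ ≤ adeg_i Δ(Γ) for i = 0,…,d; that is, for each i the number of facets of Γ of dimension i−1 is at most the number of facets of Δ(Γ) of dimension i−1. In particular, the total number of facets satisfies |facets(Γ)| ≤ |facets(Δ(Γ))|. (Only axioms (S3) and (S4) are needed.) -/
import Mathlib


noncomputable section
namespace SimpPaper

/-- A simplicial complex on the vertex set `[n]`: a collection of subsets of `[n]`
closed under inclusion. -/
structure SC (n : ℕ) where
  faces : Finset (Finset (Fin n))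
  down_closed : ∀ F ∈ faces, ∀ G ⊆ F, G ∈ faces

variable {n : ℕ}

/-- The facets (maximal faces) of a simplicial complex. -/
def facets (Γ : SC n) : Finset (Finset (Fin n)) :=
  Γ.faces.filter (fun F => ∀ G ∈ Γ.faces, F ⊆ G → F = G)

/-- The number of faces with `k` vertices (i.e. of dimension `k-1`);
this encodes the `f`-vector. -/
def faceCount (Γ : SC n) (k : ℕ) : ℕ := (Γ.faces.filter (fun F => F.card = k)).card

/-- `adeg_i Γ`: the number of facets of dimension `i-1`, i.e. with `i` vertices. -/
def adegi (Γ : SC n) (i : ℕ) : ℕ := ((facets Γ).filter (fun F => F.card = i)).card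

/-- `adeg Γ`: the total number of facets of `Γ`. -/
def adeg (Γ : SC n) : ℕ := (facets Γ).card

/-- `Γ` is `(d-1)`-dimensional: it has a face with `d` vertices and no larger faces. -/
def dimIs (Γ : SC n) (d : ℕ) : Prop :=
  (∃ F ∈ Γ.faces, F.card = d) ∧ ∀ F ∈ Γ.faces, F.card ≤ d

/-- A shifted complex: together with each face `F` it contains all sets
`(F ∖ {i}) ∪ {j}` for `i ∈ F` and `j > i`. -/
def IsShifted (Γ : SC n) : Prop :=
  ∀ F ∈ Γ.faces, ∀ i ∈ F, ∀ j : Fin n, i < j → insert j (F.erase i) ∈ Γ.faces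

/-- A shifting operation: a map of simplicial complexes on `[n]` satisfying axioms
(S1) the image is shifted, (S2) shifted complexes are fixed, (S3) the `f`-vector is
preserved, and (S4) subcomplexes are sent to subcomplexes. -/
structure ShiftOp (n : ℕ) where
  Δ : SC n → SC n
  shifted : ∀ Γ : SC n, IsShifted (Δ Γ)
  fixes_shifted : ∀ Γ : SC n, IsShifted Γ → Δ Γ = Γ
  fvec_eq : ∀ (Γ : SC n) (k : ℕ), faceCount (Δ Γ) k = faceCount Γ k
  mono : ∀ Γ' Γ : SC n, Γ'.faces ⊆ Γ.faces → (Δ Γ').faces ⊆ (Δ Γ).faces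

/-- The subcomplex of faces contained in some face with `k+1` vertices. -/
def subk (Γ : SC n) (k : ℕ) : SC n where
  faces := Γ.faces.filter (fun G => ∃ F ∈ Γ.faces, F.card = k + 1 ∧ G ⊆ F)
  down_closed := by
    intro F hF G hG
    simp only [Finset.mem_filter] at hF ⊢
    obtain ⟨hF1, H, hH, hHc, hFH⟩ := hF
    exact ⟨Γ.down_closed F hF1 G hG, H, hH, hHc, hG.trans hFH⟩

lemma split_lemma (Γ : SC n) (k : ℕ) :
    adegi Γ k + faceCount (subk Γ k) k = faceCount Γ k := by
  classical
  have hunion : Γ.faces.filter (fun F => F.card = k) =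
      (facets Γ).filter (fun F => F.card = k) ∪
        (subk Γ k).faces.filter (fun F => F.card = k) := by
    ext F
    simp only [Finset.mem_filter, Finset.mem_union, facets, subk]
    constructor
    · rintro ⟨hF, hc⟩
      by_cases hfac : ∀ G ∈ Γ.faces, F ⊆ G → F = G
      · exact Or.inl ⟨⟨hF, hfac⟩, hc⟩
      · push_neg at hfac
        obtain ⟨G, hG, hFG, hne⟩ := hfac
        have hlt : F ⊂ G := ssubset_of_subset_of_ne hFG hne
        have hcard : k + 1 ≤ G.card := by
          have := Finset.card_lt_card hlt
          omega
        obtain ⟨H, hFH, hHG, hHc⟩ :=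
          Finset.exists_subsuperset_card_eq hFG (by omega) hcard
        refine Or.inr ⟨⟨hF, H, Γ.down_closed G hG H hHG, hHc, hFH⟩, hc⟩
    · rintro (⟨⟨hF, _⟩, hc⟩ | ⟨⟨hF, _⟩, hc⟩) <;> exact ⟨hF, hc⟩
  have hdisj : Disjoint ((facets Γ).filter (fun F => F.card = k))
      ((subk Γ k).faces.filter (fun F => F.card = k)) := by
    rw [Finset.disjoint_left]
    rintro F hF1 hF2
    simp only [Finset.mem_filter, facets, subk] at hF1 hF2
    obtain ⟨⟨_, hfac⟩, hc⟩ := hF1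
    obtain ⟨⟨_, H, hH, hHc, hFH⟩, _⟩ := hF2
    have := hfac H hH hFH
    subst this
    omega
  have := congrArg Finset.card hunion
  rw [Finset.card_union_of_disjoint hdisj] at this
  unfold adegi faceCount
  exact this.symm

lemma faceCount_subk_succ (Γ : SC n) (k : ℕ) :
    faceCount (subk Γ k) (k + 1) = faceCount Γ (k + 1) := by
  unfold faceCount subk
  congr 1
  ext F
  simp only [Finset.mem_filter]
  constructor
  · rintro ⟨⟨hF, _⟩, hc⟩; exact ⟨hF, hc⟩
  · rintro ⟨hF, hc⟩; exact ⟨⟨hF, F, hF, hc, subset_rfl⟩, hc⟩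

/-- For every shifting operation `Δ` and every `(d-1)`-dimensional
simplicial complex `Γ` one has `adeg_i Γ ≤ adeg_i Δ(Γ)` for `i = 0,…,d`; in particular
the total number of facets satisfies `|facets(Γ)| ≤ |facets(Δ(Γ))|`. -/
theorem adegi_le_adegi_shift (Δop : ShiftOp n) (Γ : SC n) (d : ℕ) (hd : dimIs Γ d) :
    (∀ i : ℕ, i ≤ d → adegi Γ i ≤ adegi (Δop.Δ Γ) i) ∧ adeg Γ ≤ adeg (Δop.Δ Γ) := by
  classical
  set DΓ := Δop.Δ Γ with hDΓ
  -- key inequality for every k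
  have key : ∀ k : ℕ, adegi Γ k ≤ adegi DΓ k := by
    intro k
    have hsubfaces : (subk Γ k).faces ⊆ Γ.faces := Finset.filter_subset _ _
    have hmono := Δop.mono (subk Γ k) Γ hsubfaces
    -- the (k+1)-faces of Δ(subk Γ k) and of ΔΓ coincide
    have hA : (Δop.Δ (subk Γ k)).faces.filter (fun F => F.card = k + 1) =
        DΓ.faces.filter (fun F => F.card = k + 1) := by
      apply Finset.eq_of_subset_of_card_le
      · exact Finset.filter_subset_filter _ hmono
      · have h1 : faceCount (Δop.Δ (subk Γ k)) (k + 1) = faceCount Γ (k + 1) := by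
          rw [Δop.fvec_eq, faceCount_subk_succ]
        have h2 : faceCount DΓ (k + 1) = faceCount Γ (k + 1) := Δop.fvec_eq Γ (k + 1)
        simp only [faceCount] at h1 h2
        omega
    -- hence subk DΓ k ⊆ Δ(subk Γ k)
    have hsub : (subk DΓ k).faces ⊆ (Δop.Δ (subk Γ k)).faces := by
      intro G hG
      simp only [subk, Finset.mem_filter] at hG
      obtain ⟨hGf, H, hH, hHc, hGH⟩ := hG
      have hHA : H ∈ (Δop.Δ (subk Γ k)).faces.filter (fun F => F.card = k + 1) := by
        rw [hA]; exact Finset.mem_filter.mpr ⟨hH, hHc⟩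
      exact (Δop.Δ (subk Γ k)).down_closed H (Finset.mem_filter.mp hHA).1 G hGH
    have hcnt : faceCount (subk DΓ k) k ≤ faceCount (subk Γ k) k := by
      calc faceCount (subk DΓ k) k
          ≤ faceCount (Δop.Δ (subk Γ k)) k :=
            Finset.card_le_card (Finset.filter_subset_filter _ hsub)
        _ = faceCount (subk Γ k) k := Δop.fvec_eq _ k
    have e1 := split_lemma Γ k
    have e2 := split_lemma DΓ k
    have e3 : faceCount DΓ k = faceCount Γ k := Δop.fvec_eq Γ k
    omega
  refine ⟨fun i _ => key i, ?_⟩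
  -- all faces of Γ have ≤ d vertices; same for DΓ
  have hcardΓ : ∀ F ∈ Γ.faces, F.card ≤ d := hd.2
  have hcardD : ∀ F ∈ DΓ.faces, F.card ≤ d := by
    intro F hF
    by_contra hgt
    have h0 : faceCount Γ F.card = 0 := by
      simp only [faceCount, Finset.card_eq_zero, Finset.filter_eq_empty_iff]
      intro G hG hGc
      have := hcardΓ G hG
      omega
    have h1 : faceCount DΓ F.card ≠ 0 :=
      Finset.card_ne_zero_of_mem (Finset.mem_filter.mpr ⟨hF, rfl⟩)
    exact h1 (by rw [Δop.fvec_eq]; exact h0)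
  have hsumΓ : adeg Γ = ∑ k ∈ Finset.range (d + 1), adegi Γ k := by
    unfold adeg adegi
    exact Finset.card_eq_sum_card_fiberwise (fun F hF => Finset.mem_range.mpr
      (by have := hcardΓ F (Finset.mem_filter.mp hF).1; omega))
  have hsumD : adeg DΓ = ∑ k ∈ Finset.range (d + 1), adegi DΓ k := by
    unfold adeg adegi
    exact Finset.card_eq_sum_card_fiberwise (fun F hF => Finset.mem_range.mpr
      (by have := hcardD F (Finset.mem_filter.mp hF).1; omega))
  rw [hsumΓ, hsumD]
  exact Finset.sum_le_sum fun k _ => key k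

end SimpPaper
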